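/- Let M be a convex, centrally symmetric subset of a normed space X, let T : span(M) → ℝ^m be linear, and let Φ : ℝ^m → X be an arbitrary map. Then sup_{x ∈ M} ‖x − Φ(T x)‖ ≥ sup{‖x‖ : x ∈ M, T x = 0}. -/

import Mathlib

open ENNReal

theorem nnnorm_le_max_nnnorm_sub_nnnorm_neg_sub {E : Type*} [SeminormedAddCommGroup E]
    [NormedSpace ℝ E] (x c : E) : ‖x‖₊ ≤ max ‖x - c‖₊ ‖-x - c‖₊ := by
  have htwo : 2 * ‖x‖ ≤ ‖x - c‖ + ‖-x - c‖ :=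
    calc 2 * ‖x‖ = ‖(x - c) - (-x - c)‖ := by
          rw [sub_sub_sub_cancel_right, sub_neg_eq_add, ← two_smul ℝ x, norm_smul,
            Real.norm_two]
      _ ≤ ‖x - c‖ + ‖-x - c‖ := norm_sub_le _ _
  rw [← NNReal.coe_le_coe, NNReal.coe_max, coe_nnnorm, coe_nnnorm, coe_nnnorm]
  rcases le_total ‖x - c‖ ‖-x - c‖ with h | h
  · exact le_max_of_le_right (by linarith)
  · exact le_max_of_le_left (by linarith)

/-- Every recovery map sends all of `M ∩ ker T` to the single point `Φ 0`; this set is symmetric,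
so `Φ 0` misses `x` or `-x` by at least `‖x‖`. -/
theorem abstract_recovery_lower_bound_general
    {X : Type*} [NormedAddCommGroup X] [NormedSpace ℝ X]
    (M : Set X) (hsym : ∀ x ∈ M, -x ∈ M)
    (m : ℕ) (T : (Submodule.span ℝ M) →ₗ[ℝ] (Fin m → ℝ))
    (Φ : (Fin m → ℝ) → X) :
    (⨆ (x : X) (hx : x ∈ M),
        (‖x - Φ (T ⟨x, Submodule.subset_span hx⟩)‖₊ : ℝ≥0∞))
      ≥ ⨆ (x : X) (hx : x ∈ M) (_ : T ⟨x, Submodule.subset_span hx⟩ = 0),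
          (‖x‖₊ : ℝ≥0∞) := by
  refine iSup_le fun x => iSup_le fun hx => iSup_le fun hT => ?_
  have hx' : -x ∈ M := hsym x hx
  have hT' : T ⟨-x, Submodule.subset_span hx'⟩ = 0 := by
    change T (-⟨x, Submodule.subset_span hx⟩) = 0
    rw [map_neg, hT, neg_zero]
  have herr (y : X) (hy : y ∈ M) :
      (‖y - Φ (T ⟨y, Submodule.subset_span hy⟩)‖₊ : ℝ≥0∞) ≤
        ⨆ (y : X) (hy : y ∈ M), (‖y - Φ (T ⟨y, Submodule.subset_span hy⟩)‖₊ : ℝ≥0∞) :=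
    le_iSup₂ (f := fun y hy => (‖y - Φ (T ⟨y, Submodule.subset_span hy⟩)‖₊ : ℝ≥0∞)) y hy
  calc (‖x‖₊ : ℝ≥0∞) ≤ max (‖x - Φ 0‖₊ : ℝ≥0∞) ‖-x - Φ 0‖₊ := by
        exact_mod_cast nnnorm_le_max_nnnorm_sub_nnnorm_neg_sub x (Φ 0)
    _ ≤ _ := max_le (hT ▸ herr x hx) (hT' ▸ herr (-x) hx')

theorem abstract_recovery_lower_bound
    {X : Type*} [NormedAddCommGroup X] [NormedSpace ℝ X]
    (M : Set X) (hconvex : Convex ℝ M) (hsym : ∀ x ∈ M, -x ∈ M)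
    (m : ℕ) (T : (Submodule.span ℝ M) →ₗ[ℝ] (Fin m → ℝ))
    (Φ : (Fin m → ℝ) → X) :
    (⨆ (x : X) (hx : x ∈ M),
        (‖x - Φ (T ⟨x, Submodule.subset_span hx⟩)‖₊ : ℝ≥0∞))
      ≥ ⨆ (x : X) (hx : x ∈ M) (_ : T ⟨x, Submodule.subset_span hx⟩ = 0),
          (‖x‖₊ : ℝ≥0∞) :=
  abstract_recovery_lower_bound_general M hsym m T Φ
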